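/- For all integers j ≥ i ≥ 0 with j ≠ i+1, the subgroup of F generated by Jones' subgroup F⃗ together with the element x_i x_j equals G. -/

import Mathlib

set_option maxHeartbeats 1000000

noncomputable section

/-- The unit interval `[0,1]` as a type. -/
abbrev I : Type := Set.Icc (0:ℝ) 1

/-- The underlying function of the generator `x₀` of Thompson's group `F`. -/
def x0fun (t : ℝ) : ℝ := if t ≤ 1/4 then 2*t else if t ≤ 1/2 then t + 1/4 else t/2 + 1/2

/-- The inverse of `x0fun`. -/
def x0inv (t : ℝ) : ℝ := if t ≤ 1/2 then t/2 else if t ≤ 3/4 then t - 1/4 else 2*t - 1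

/-- The underlying function of the generator `x₁` of Thompson's group `F`. -/
def x1fun (t : ℝ) : ℝ :=
  if t ≤ 1/2 then t else if t ≤ 5/8 then 2*t - 1/2 else if t ≤ 3/4 then t + 1/8 else t/2 + 1/2

/-- The inverse of `x1fun`. -/
def x1inv (t : ℝ) : ℝ :=
  if t ≤ 1/2 then t else if t ≤ 3/4 then t/2 + 1/4 else if t ≤ 7/8 then t - 1/8 else 2*t - 1

/-- The generator `x₀` of Thompson's group `F`, as a bijection of `[0,1]`. -/
def x₀ : Equiv.Perm I where
  toFun t := ⟨x0fun t.1, by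
    obtain ⟨h0, h1⟩ := Set.mem_Icc.mp t.2
    simp only [Set.mem_Icc, x0fun]
    split_ifs <;> constructor <;> linarith⟩
  invFun t := ⟨x0inv t.1, by
    obtain ⟨h0, h1⟩ := Set.mem_Icc.mp t.2
    simp only [Set.mem_Icc, x0inv]
    split_ifs <;> constructor <;> linarith⟩
  left_inv t := by
    obtain ⟨h0, h1⟩ := Set.mem_Icc.mp t.2
    apply Subtype.ext
    show x0inv (x0fun t.1) = t.1
    simp only [x0fun, x0inv]
    split_ifs <;> linarith
  right_inv t := by
    obtain ⟨h0, h1⟩ := Set.mem_Icc.mp t.2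
    apply Subtype.ext
    show x0fun (x0inv t.1) = t.1
    simp only [x0fun, x0inv]
    split_ifs <;> linarith

/-- The generator `x₁` of Thompson's group `F`, as a bijection of `[0,1]`. -/
def x₁ : Equiv.Perm I where
  toFun t := ⟨x1fun t.1, by
    obtain ⟨h0, h1⟩ := Set.mem_Icc.mp t.2
    simp only [Set.mem_Icc, x1fun]
    split_ifs <;> constructor <;> linarith⟩
  invFun t := ⟨x1inv t.1, by
    obtain ⟨h0, h1⟩ := Set.mem_Icc.mp t.2
    simp only [Set.mem_Icc, x1inv]
    split_ifs <;> constructor <;> linarith⟩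
  left_inv t := by
    obtain ⟨h0, h1⟩ := Set.mem_Icc.mp t.2
    apply Subtype.ext
    show x1inv (x1fun t.1) = t.1
    simp only [x1fun, x1inv]
    split_ifs <;> linarith
  right_inv t := by
    obtain ⟨h0, h1⟩ := Set.mem_Icc.mp t.2
    apply Subtype.ext
    show x1fun (x1inv t.1) = t.1
    simp only [x1fun, x1inv]
    split_ifs <;> linarith

/-- Composition in Thompson's group `F` is from left to right: the product `f·g` in the paper
is the function `t ↦ g (f t)`.  In Lean, `Equiv.Perm` multiplication is composition from right
to left: `(f * g) t = f (g t)`.  Hence a paper product `a₁ a₂ ⋯ aₙ` corresponds to the Lean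
product `aₙ * ⋯ * a₂ * a₁`.

`x i` is the standard generator `x_i` of Thompson's group `F`: here `x_0, x_1` are the explicit
piecewise-linear maps, and for `i ≥ 1`, `x_{i+1} = x_0^{-i} x_1 x_0^{i}` (left-to-right
composition), which in Lean's convention is `x₀ ^ i * x₁ * (x₀ ^ i)⁻¹`. -/
def x (i : ℕ) : Equiv.Perm I := if i = 0 then x₀ else x₀ ^ (i-1) * x₁ * (x₀ ^ (i-1))⁻¹

/-- Thompson's group `F`, realized as the group of increasing piecewise-linear homeomorphisms of
`[0,1]` with dyadic breakpoints and slopes powers of 2; it is generated by `x_0` and `x_1`. -/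
def F : Subgroup (Equiv.Perm I) := Subgroup.closure {x 0, x 1}

/-- The subgroup `G = ⟨x_0x_2, x_1x_2⟩` of `F` (products written left-to-right, so
`x_0x_2` is the Lean element `x 2 * x 0`). -/
def G : Subgroup (Equiv.Perm I) := Subgroup.closure {x 2 * x 0, x 2 * x 1}

/-- Jones' subgroup `F⃗ = ⟨x_0x_1, x_1x_2, x_2x_3⟩` of `F` (products written left-to-right). -/
def JonesF : Subgroup (Equiv.Perm I) := Subgroup.closure {x 1 * x 0, x 2 * x 1, x 3 * x 2}

lemma x_mem_F (i : ℕ) : x i ∈ F := by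
  have h0 : x 0 ∈ F := Subgroup.subset_closure (by simp)
  have h1 : x 1 ∈ F := Subgroup.subset_closure (by simp)
  have hx0 : x₀ ∈ F := by simpa [x] using h0
  have hx1 : x₁ ∈ F := by simpa [x] using h1
  rcases Nat.eq_zero_or_pos i with h | h
  · subst h; exact h0
  · have : x i = x₀ ^ (i-1) * x₁ * (x₀ ^ (i-1))⁻¹ := by
      simp [x, Nat.pos_iff_ne_zero.mp h]
    rw [this]
    exact mul_mem (mul_mem (pow_mem hx0 _) hx1) (inv_mem (pow_mem hx0 _))

lemma y0_mem_G : x 2 * x 0 ∈ G := Subgroup.subset_closure (by simp)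

lemma y1_mem_G : x 2 * x 1 ∈ G := Subgroup.subset_closure (by simp)

/-- The length `|w|` of an element of `F`: the minimal `n` such that `w` is a product of `n`
elements of `{x_i^{±1} : i ≥ 0}`.  This equals the length of the normal form of `w`. -/
def len (w : Equiv.Perm I) : ℕ :=
  sInf {n | ∃ l : List (Equiv.Perm I), l.length = n ∧
    (∀ a ∈ l, ∃ i : ℕ, a = x i ∨ a = (x i)⁻¹) ∧ l.prod = w}

/-- The element of `F` given by the positive word `x_{i_1} x_{i_2} ⋯ x_{i_n}` (composition from
left to right), where `l = [i_1, i_2, …, i_n]`.  Since Lean's multiplication of permutations is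
composition from right to left, this is the Lean product of the reversed list of letters. -/
def pp (l : List ℕ) : Equiv.Perm I := ((l.map x).reverse).prod

/-- `l = [i_1, …, i_n]` encodes a *block*: a positive normal form `x_{i_1}⋯x_{i_n}`
(so `i_1 ≤ ⋯ ≤ i_n`) with `i_1 ≠ i_n` and `i_j < i_1 + j` for all `j = 1, …, n`
(here with 0-based indexing: `l[k] < l[0] + k + 1`). -/
def IsBlock (l : List ℕ) : Prop :=
  l ≠ [] ∧ l.Pairwise (· ≤ ·) ∧ l.headI ≠ l.getLastD 0 ∧
    ∀ k < l.length, l.getD k 0 < l.headI + k + 1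

/-- The double coset `F⃗ a F⃗` of Jones' subgroup.  (As a set this does not depend on the
composition convention, since `u, v` range over all of `F⃗`.) -/
def dCoset (a : Equiv.Perm I) : Set (Equiv.Perm I) :=
  {w | ∃ u ∈ JonesF, ∃ v ∈ JonesF, w = v * a * u}

/-- A real number is dyadic if it has the form `a / 2^n` with `a, n` natural numbers. -/
def IsDyadic (α : ℝ) : Prop := ∃ (a : ℕ) (n : ℕ), α = a / 2^n

/-- The subgroup of all permutations fixing every point of `U`. -/
def fixing (U : Set ℝ) : Subgroup (Equiv.Perm I) where
  carrier := {g | ∀ t : I, (t : ℝ) ∈ U → g t = t}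
  one_mem' := fun _ _ => rfl
  mul_mem' := by
    intro a b ha hb t ht
    simp only [Equiv.Perm.mul_apply]
    rw [hb t ht, ha t ht]
  inv_mem' := by
    intro a ha t ht
    conv_lhs => rw [← ha t ht]
    exact Equiv.symm_apply_apply a t

/-- `H_U`: the stabilizer in `F` of the finite set `U ⊂ (0,1)`, i.e. the subgroup of all
elements of `F` fixing every point of `U`. -/
def HU (U : Set ℝ) : Subgroup (Equiv.Perm I) := F ⊓ fixing U

/-! The relations `x_k⁻¹ x_n x_k = x_{n+1}` (`k < n`) of `F` alone force `G` to contain every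
product `x_m x_n`, in particular all of `F⃗` and `x_i x_j`; for `x_1x_2` and `x_1²` this uses
`(x_1x_2)² = x_1² · x_2x_4` together with `x_2x_4 = (x_0x_2)⁻¹ (x_1x_2) (x_0x_2)`.
Conversely, modulo the elements `x_n x_{n+1}` of `F⃗`, a product `x_i x_j` with `j ≥ i + 2` can be
moved to `x_{j-2} x_j`, and the pairs `x_m x_{m+2}` and the squares `x_m²` can be traded for one
another while lowering `m`, down to `x_0 x_2`.

The relations are checked on the explicit maps: `x_{n+1} = x_0⁻¹ x_n x_0` for `n ≥ 1` holds by
definition, and `x_1x_0⁻¹` is the identity on `[3/4, 1]`, which contains the support of every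
`x_n` with `n ≥ 2`. -/

/-- The defining relations `x_k⁻¹ x_n x_k = x_{n+1}` (`k < n`) of Thompson's group `F`, written
for the right-to-left product of `Equiv.Perm`. -/
def ThompsonRelations {M : Type*} [Group M] (g : ℕ → M) : Prop :=
  ∀ ⦃k n : ℕ⦄, k < n → g k * g n * (g k)⁻¹ = g (n + 1)

namespace ThompsonRelations

variable {M : Type*} [Group M] {g : ℕ → M}

theorem mul_eq_mul_of_lt (hg : ThompsonRelations g) {k n : ℕ} (h : k < n) :
    g k * g n = g (n + 1) * g k := by
  rw [← hg h, inv_mul_cancel_right]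

theorem conj_mul_mul (hg : ThompsonRelations g) {k l n : ℕ} (hk : k < n) (hl : l ≤ n) :
    g l * g k * g n * (g l * g k)⁻¹ = g (n + 2) := by
  calc g l * g k * g n * (g l * g k)⁻¹ = g l * (g k * g n * (g k)⁻¹) * (g l)⁻¹ := by group
    _ = g (n + 2) := by rw [hg hk, hg (by omega : l < n + 1)]

section Generation

variable {K : Subgroup M}

theorem sq_zero_mem (hg : ThompsonRelations g) (ha : g 2 * g 0 ∈ K) (hb : g 2 * g 1 ∈ K) :
    g 0 * g 0 ∈ K := by
  have hconj : g 0 * g 1 * (g 0)⁻¹ = g 2 := hg (by norm_num)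
  have hsq : g 0 * g 0 = g 2 * g 0 * (g 2 * g 1)⁻¹ * (g 2 * g 0) := by
    rw [← hconj]; group
  rw [hsq]
  exact mul_mem (mul_mem ha (inv_mem hb)) ha

theorem sq_one_mem (hg : ThompsonRelations g) (ha : g 2 * g 0 ∈ K) (hb : g 2 * g 1 ∈ K) :
    g 1 * g 1 ∈ K := by
  have hconj : g 2 * g 0 * (g 2 * g 1) * (g 2 * g 0)⁻¹ = g 4 * g 2 := by
    have h₁ : g 2 * g 0 * g 1 * (g 2 * g 0)⁻¹ = g 2 := by
      calc g 2 * g 0 * g 1 * (g 2 * g 0)⁻¹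
          = g 2 * (g 0 * g 1 * (g 0)⁻¹) * (g 2)⁻¹ := by group
        _ = g 2 := by rw [(hg (by norm_num) : g 0 * g 1 * (g 0)⁻¹ = g 2)]; group
    rw [← conj_mul, h₁, hg.conj_mul_mul (by norm_num) le_rfl]
  have hsq : g 2 * g 1 * (g 2 * g 1) = g 4 * g 2 * (g 1 * g 1) := by
    calc g 2 * g 1 * (g 2 * g 1) = g 2 * (g 1 * g 2) * g 1 := by group
      _ = g 2 * g 3 * g 1 * g 1 := by rw [hg.mul_eq_mul_of_lt (by norm_num : 1 < 2)]; group
      _ = g 4 * g 2 * (g 1 * g 1) := by rw [hg.mul_eq_mul_of_lt (by norm_num : 2 < 3)]; group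
  have h : g 1 * g 1 =
      (g 2 * g 0 * (g 2 * g 1) * (g 2 * g 0)⁻¹)⁻¹ * (g 2 * g 1 * (g 2 * g 1)) := by
    rw [hconj, hsq]; group
  rw [h]
  exact mul_mem (inv_mem (mul_mem (mul_mem ha hb) (inv_mem ha))) (mul_mem hb hb)

theorem mul_inv_zero_mem (hg : ThompsonRelations g) (ha : g 2 * g 0 ∈ K)
    (hb : g 2 * g 1 ∈ K) : ∀ n, g n * (g 0)⁻¹ ∈ K
  | 0 => by simp
  | 1 => by
    have h : g 1 * (g 0)⁻¹ = g 1 * g 1 * (g 2 * g 0)⁻¹ := by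
      rw [← hg.mul_eq_mul_of_lt (by norm_num : 0 < 1)]; group
    rw [h]
    exact mul_mem (hg.sq_one_mem ha hb) (inv_mem ha)
  | 2 => by
    have h : g 2 * (g 0)⁻¹ = g 2 * g 1 * (g 2 * g 0)⁻¹ := by
      rw [← hg.mul_eq_mul_of_lt (by norm_num : 0 < 1)]; group
    rw [h]
    exact mul_mem hb (inv_mem ha)
  | n + 3 => by
    have h : g (n + 3) * (g 0)⁻¹ = g 0 * g 0 * (g (n + 1) * (g 0)⁻¹) * (g 0 * g 0)⁻¹ := by
      rw [← conj_mul, hg.conj_mul_mul (by omega) (by omega)]; group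
    rw [h]
    have hsq := hg.sq_zero_mem ha hb
    exact mul_mem (mul_mem hsq (mul_inv_zero_mem hg ha hb (n + 1))) (inv_mem hsq)

theorem mul_mem_of_generators_mem (hg : ThompsonRelations g) (ha : g 2 * g 0 ∈ K)
    (hb : g 2 * g 1 ∈ K) (m n : ℕ) : g n * g m ∈ K := by
  have hn := hg.mul_inv_zero_mem ha hb n
  rcases m with _ | m
  · simpa using mul_mem hn (hg.sq_zero_mem ha hb)
  · have h : g n * g (m + 1) = g n * (g 0)⁻¹ * (g (m + 2) * (g 0)⁻¹) * (g 0 * g 0) := by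
      rw [← (hg (by omega) : g 0 * g (m + 1) * (g 0)⁻¹ = g (m + 2))]; group
    rw [h]
    exact mul_mem (mul_mem hn (hg.mul_inv_zero_mem ha hb _)) (hg.sq_zero_mem ha hb)

end Generation

theorem succ_mul_mem (hg : ThompsonRelations g) {K : Subgroup M} (h₀ : g 1 * g 0 ∈ K)
    (h₁ : g 2 * g 1 ∈ K) (h₂ : g 3 * g 2 ∈ K) : ∀ n, g (n + 1) * g n ∈ K
  | 0 => h₀
  | 1 => h₁
  | 2 => h₂
  | n + 3 => by
    have h : g (n + 4) * g (n + 3) = g 1 * g 0 * (g (n + 2) * g (n + 1)) * (g 1 * g 0)⁻¹ := by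
      rw [← conj_mul, hg.conj_mul_mul (by omega) (by omega),
        hg.conj_mul_mul (by omega) (by omega)]
    rw [h]
    exact mul_mem (mul_mem h₀ (succ_mul_mem hg h₀ h₁ h₂ (n + 1))) (inv_mem h₀)

section Descent

variable {H : Subgroup M}

theorem inv_mul_mem_of_mul_mem (hy : ∀ n, g (n + 1) * g n ∈ H) {m n : ℕ}
    (h : g (n + 1) * g m ∈ H) : (g m)⁻¹ * g n ∈ H := by
  have e : (g m)⁻¹ * g n = (g (n + 1) * g m)⁻¹ * (g (n + 1) * g n) := by group
  rw [e]
  exact mul_mem (inv_mem h) (hy n)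

theorem mul_succ_mem (hg : ThompsonRelations g) (hy : ∀ n, g (n + 1) * g n ∈ H)
    {i n : ℕ} (h : g (n + 1) * g i ∈ H) (hin : i + 1 < n) :
    g (n + 1) * g (i + 1) ∈ H := by
  have e : g (i + 1) * g n = g (i + 1) * g i * ((g i)⁻¹ * g n) := by group
  rw [← hg.mul_eq_mul_of_lt hin, e]
  exact mul_mem (hy i) (inv_mul_mem_of_mul_mem hy h)

theorem mul_pred_mem (hg : ThompsonRelations g) (hy : ∀ n, g (n + 1) * g n ∈ H)
    {i n : ℕ} (h : g (n + 2) * g (i + 1) ∈ H) (hin : i + 1 < n) :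
    g n * g i ∈ H := by
  have e : g n * g i =
      (g (i + 1))⁻¹ * (g (i + 1) * g n * (g (i + 1))⁻¹) * (g (i + 1) * g i) := by
    group
  rw [e, hg hin]
  exact mul_mem (inv_mul_mem_of_mul_mem hy h) (hy i)

theorem sq_mem_of_mul_mem (hg : ThompsonRelations g) (hy : ∀ n, g (n + 1) * g n ∈ H)
    {m : ℕ} (h : g (m + 2) * g m ∈ H) : g m * g m ∈ H := by
  have hc := inv_mul_mem_of_mul_mem hy h
  have e : (g m)⁻¹ * g (m + 1) * ((g m)⁻¹ * g (m + 1)) * (g (m + 2) * g (m + 1))⁻¹ =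
      (g m * g m)⁻¹ := by
    rw [← (hg (lt_add_one m) : g m * g (m + 1) * (g m)⁻¹ = g (m + 2))]; group
  have hinv := mul_mem (mul_mem hc hc) (inv_mem (hy (m + 1)))
  rwa [e, inv_mem_iff] at hinv

theorem mul_mem_of_sq_mem (hg : ThompsonRelations g) (hy : ∀ n, g (n + 1) * g n ∈ H)
    {m : ℕ} (h : g m * g m ∈ H) : g (m + 3) * g m ∈ H := by
  have e : g (m + 3) * g m = g m * g m * (g (m + 1) * g m) * (g m * g m)⁻¹ := by
    rw [← conj_mul, hg.conj_mul_mul (lt_add_one m) (by omega)]; group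
  rw [e]
  exact mul_mem (mul_mem h (hy m)) (inv_mem h)

theorem mul_mem_of_mul_mem_succ (hg : ThompsonRelations g) (hy : ∀ n, g (n + 1) * g n ∈ H)
    {m : ℕ} (h : g (m + 3) * g (m + 1) ∈ H) : g (m + 2) * g m ∈ H :=
  hg.mul_pred_mem hy (hg.mul_mem_of_sq_mem hy (hg.sq_mem_of_mul_mem hy h)) (lt_add_one _)

theorem two_mul_zero_mem_of_mul_mem (hg : ThompsonRelations g)
    (hy : ∀ n, g (n + 1) * g n ∈ H) : ∀ {m : ℕ}, g (m + 2) * g m ∈ H → g 2 * g 0 ∈ H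
  | 0, h => h
  | _ + 1, h => two_mul_zero_mem_of_mul_mem hg hy (hg.mul_mem_of_mul_mem_succ hy h)

theorem mul_mem_of_le_add_two (hg : ThompsonRelations g) (hy : ∀ n, g (n + 1) * g n ∈ H)
    {i d : ℕ} (h : g (i + d + 2) * g i ∈ H) :
    g (i + d + 2) * g (i + d) ∈ H := by
  induction d generalizing i with
  | zero => exact h
  | succ d ih =>
    have h' := hg.mul_succ_mem hy h (by omega)
    rw [show i + (d + 1) + 2 = i + 1 + d + 2 by omega] at h' ⊢
    rw [show i + (d + 1) = i + 1 + d by omega]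
    exact ih h'

theorem two_mul_zero_mem (hg : ThompsonRelations g) (hy : ∀ n, g (n + 1) * g n ∈ H)
    (i j : ℕ) (hij : i ≤ j) (hj : j ≠ i + 1) (h : g j * g i ∈ H) :
    g 2 * g 0 ∈ H := by
  rcases hij.eq_or_lt with rfl | hlt
  · have h₃ := hg.mul_succ_mem hy (hg.mul_mem_of_sq_mem hy h) (by omega)
    exact hg.two_mul_zero_mem_of_mul_mem hy h₃
  · obtain ⟨d, rfl⟩ : ∃ d, j = i + d + 2 := ⟨j - i - 2, by omega⟩
    exact hg.two_mul_zero_mem_of_mul_mem hy (hg.mul_mem_of_le_add_two hy h)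

end Descent

end ThompsonRelations

theorem x₁_apply_of_le (t : I) (ht : (t : ℝ) ≤ 1 / 2) : x₁ t = t := by
  apply Subtype.ext
  show x1fun t = t
  simp only [x1fun]
  split_ifs <;> linarith

theorem x₁_apply_of_ge (t : I) (ht : 3 / 4 ≤ (t : ℝ)) : x₁ t = x₀ t := by
  apply Subtype.ext
  show x1fun t = x0fun t
  simp only [x1fun, x0fun]
  split_ifs <;> linarith

theorem x₀_inv_apply_lt (t : I) (ht : (t : ℝ) < 3 / 4) : ((x₀⁻¹ t : I) : ℝ) < 1 / 2 := by
  obtain ⟨h0, -⟩ := Set.mem_Icc.mp t.2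
  show x0inv t < 1 / 2
  simp only [x0inv]
  split_ifs <;> linarith

theorem x_one : x 1 = x₁ := by simp [x]

theorem x₀_conj_x {n : ℕ} (hn : 1 ≤ n) : x₀ * x n * x₀⁻¹ = x (n + 1) := by
  obtain ⟨m, rfl⟩ : ∃ m, n = m + 1 := ⟨n - 1, by omega⟩
  simp only [x, Nat.add_sub_cancel, Nat.add_one_ne_zero, if_false, pow_succ']
  group

theorem x_apply_of_lt {n : ℕ} (hn : 2 ≤ n) (t : I) (ht : (t : ℝ) < 3 / 4) : x n t = t := by
  induction n, hn using Nat.le_induction generalizing t with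
  | base =>
    rw [← x₀_conj_x le_rfl, x_one, Equiv.Perm.mul_apply, Equiv.Perm.mul_apply,
      x₁_apply_of_le _ (x₀_inv_apply_lt t ht).le]
    exact x₀.apply_symm_apply t
  | succ n hn ih =>
    rw [← x₀_conj_x (by omega), Equiv.Perm.mul_apply, Equiv.Perm.mul_apply,
      ih _ (by linarith [x₀_inv_apply_lt t ht])]
    exact x₀.apply_symm_apply t

theorem commute_x₀_inv_mul_x₁ {n : ℕ} (hn : 2 ≤ n) : Commute (x₀⁻¹ * x₁) (x n) := by
  refine Equiv.Perm.Disjoint.commute fun t => ?_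
  rcases lt_or_ge (t : ℝ) (3 / 4) with ht | ht
  · exact Or.inr (x_apply_of_lt hn t ht)
  · left
    rw [Equiv.Perm.mul_apply, x₁_apply_of_ge t ht]
    exact x₀.symm_apply_apply t

theorem x₁_conj_x {n : ℕ} (hn : 2 ≤ n) : x₁ * x n * x₁⁻¹ = x (n + 1) := by
  calc x₁ * x n * x₁⁻¹ = x₀ * ((x₀⁻¹ * x₁) * x n * (x₀⁻¹ * x₁)⁻¹) * x₀⁻¹ := by group
    _ = x (n + 1) := by rw [(commute_x₀_inv_mul_x₁ hn).mul_inv_cancel, x₀_conj_x (by omega)]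

theorem thompsonRelations_x : ThompsonRelations x := by
  intro k n hkn
  rcases k.eq_zero_or_pos with rfl | hk
  · exact x₀_conj_x hkn
  induction k, hk using Nat.le_induction generalizing n with
  | base => rw [x_one]; exact x₁_conj_x hkn
  | succ k hk ih =>
    obtain ⟨m, rfl⟩ : ∃ m, n = m + 1 := ⟨n - 1, by omega⟩
    rw [← x₀_conj_x hk, ← x₀_conj_x (by omega : 1 ≤ m), ← x₀_conj_x (by omega : 1 ≤ m + 1),
      ← ih (by omega)]
    group

/-- For all `j ≥ i ≥ 0` with `j ≠ i + 1`, the subgroup of `F` generated by Jones'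
subgroup `F⃗` together with the element `x_i x_j` equals `G`.  (The paper product `x_i x_j`,
with composition left-to-right, is the Lean element `x j * x i`.) -/
theorem stmt4 (i j : ℕ) (hij : i ≤ j) (h : j ≠ i + 1) :
    JonesF ⊔ Subgroup.closure {x j * x i} = G := by
  have hx := thompsonRelations_x
  have hG : ∀ m n, x n * x m ∈ G := hx.mul_mem_of_generators_mem y0_mem_G y1_mem_G
  set H := JonesF ⊔ Subgroup.closure {x j * x i}
  have hy : ∀ n, x (n + 1) * x n ∈ H := fun n =>
    le_sup_left (a := JonesF) <| hx.succ_mul_mem (Subgroup.subset_closure (by simp))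
      (Subgroup.subset_closure (by simp)) (Subgroup.subset_closure (by simp)) n
  apply le_antisymm
  · rw [sup_le_iff, JonesF, Subgroup.closure_le, Subgroup.closure_le]
    simp [Set.insert_subset_iff, hG]
  · rw [G, Subgroup.closure_le, Set.insert_subset_iff, Set.singleton_subset_iff]
    exact ⟨hx.two_mul_zero_mem hy i j hij h (le_sup_right (a := JonesF)
      (Subgroup.subset_closure rfl)), hy 1⟩
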